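/- arXiv:1809.01759 — 4 statements merged into one kernel-verified Lean document; each statement's English description precedes it below -/
import Mathlib

section
/- There is an absolute constant c such that for every integer ℓ ≥ 1, every n ≥ 2, and every access sequence X = (x_1,…,x_m) ∈ [n]^m, there exists a binary search tree T on [n] with ℓ-DistTree_T(X) ≤ c·( Σ_{t=2}^m min_{max(1, t−ℓ) ≤ t' < t} log₂(|x_t − x_{t'}| + 2) + log₂ n ). -/
/-- Binary trees with node labels of type `α`. -/
inductive BTree (α : Type) : Type where
  | leaf : BTree α
  | node : BTree α → α → BTree α → BTree α

namespace BTree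

variable {α : Type} [LinearOrder α]

/-- The set of keys (node labels) of a binary tree. -/
def keys : BTree α → Finset α
  | .leaf => ∅
  | .node l x r => insert x (keys l ∪ keys r)

/-- The binary-search-tree property: every node's label is greater than all labels
in its left subtree and smaller than all labels in its right subtree. -/
def IsBST : BTree α → Prop
  | .leaf => True
  | .node l x r => (∀ y ∈ keys l, y < x) ∧ (∀ y ∈ keys r, x < y) ∧ IsBST l ∧ IsBST r

/-- Depth (edge-distance from the root) of the node labeled `a` in a BST. -/
def depth : BTree α → α → ℕ
  | .leaf, _ => 0
  | .node l x r, a => if a = x then 0 else if a < x then depth l a + 1 else depth r a + 1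

/-- Edge-distance between the nodes labeled `a` and `b` in a BST. -/
def dist : BTree α → α → α → ℕ
  | .leaf, _, _ => 0
  | .node l x r, a, b =>
      if a = b then 0
      else if a < x ∧ b < x then dist l a b
      else if x < a ∧ x < b then dist r a b
      else depth (node l x r) a + depth (node l x r) b

/-- The key at the root, if any. -/
def root? : BTree α → Option α
  | .leaf => none
  | .node _ x _ => some x

end BTree

/-- `fingerPos X f init i t` is the position of finger `i` just before (0-indexed) time `t`:
the initial position `init i` if finger `i` has served no access so far, and otherwise
the last key it served. Here `f s` is the finger serving the access `X s`. -/
def fingerPos {α : Type} {k : ℕ} (X : ℕ → α) (f : ℕ → Fin k) (init : Fin k → α)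
    (i : Fin k) : ℕ → α
  | 0 => init i
  | t + 1 => if f t = i then X t else fingerPos X f init i t

/-- The cost of the `k`-finger strategy `(f, init)` serving the accesses
`X 0, …, X (m-1)` in the tree `T`: at each time we pay `1` plus the distance
travelled by the serving finger. -/
def fingerCost {α : Type} [LinearOrder α] (T : BTree α) (k m : ℕ) (X : ℕ → α)
    (f : ℕ → Fin k) (init : Fin k → α) : ℕ :=
  ∑ t ∈ Finset.range m, (1 + T.dist (fingerPos X f init (f t) t) (X t))

/-- `F^k_T(X)`: the optimal cost of serving `X 0, …, X (m-1)` in `T` with `k` fingers. -/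
noncomputable def fingerOpt {α : Type} [LinearOrder α] (T : BTree α) (k m : ℕ)
    (X : ℕ → α) : ℕ :=
  sInf {c : ℕ | ∃ (f : ℕ → Fin k) (init : Fin k → α), fingerCost T k m X f init = c}

/-- `ℓ-DistTree_T(x)` for a 1-indexed access sequence `x 1, …, x m`, where `x 0` is
(by convention in the theorems below) the root key of `T`:
`∑_{i=1}^m min_{max(0, i-ℓ) ≤ j < i} (d_T(x i, x j) + 1)`. -/
noncomputable def distTreeBound (T : BTree ℕ) (l m : ℕ) (x : ℕ → ℕ) : ℕ :=
  ∑ i ∈ Finset.Icc 1 m,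
    sInf {d : ℕ | ∃ j, i - l ≤ j ∧ j < i ∧ d = T.dist (x i) (x j) + 1}


/-!
Fix a shift `s < 2 ^ K` with `n < 2 ^ K` and build the tree whose root on an interval of keys
is a key `c` maximising the `2`-adic valuation of `c + s`. Then the tree distance between `a`
and `b` is at most `2 v + 2`, where `v` is the largest valuation of `c + s` over the keys `c`
between `a` and `b`. An interval of `L` keys contains a multiple of `2 ^ (j + 1)` for at most
`L · 2 ^ (K - j)` of the `2 ^ K` shifts, so `v` averages to `O(log L)` over the shifts. Hence one
shift serves every access `x t` from its best recent predecessor at total cost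
`O(∑ log (|x t - x t'| + 2))`, and the first access, from the root, costs the depth `O(log n)`.
-/

namespace BTree

variable {α : Type} [LinearOrder α]

@[simp]
lemma dist_self (T : BTree α) (a : α) : T.dist a a = 0 := by
  cases T <;> simp [dist]

lemma dist_root (L R : BTree α) (r a : α) : (node L r R).dist a r = (node L r R).depth a := by
  by_cases h : a = r
  · subst h; simp [depth]
  · simp [dist, depth, h]

lemma exists_eq_node_of_mem_keys {T : BTree α} {a : α} (h : a ∈ T.keys) :
    ∃ L r R, T = node L r R := by
  cases T with
  | leaf => simp [keys] at h
  | node L r R => exact ⟨L, r, R, rfl⟩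

end BTree

open Finset

lemma eq_of_two_pow_dvd_of_forall_not_dvd {s q lo hi c d : ℕ}
    (hI : ∀ e ∈ Ico lo hi, ¬ 2 ^ (q + 1) ∣ e + s) (hc : c ∈ Ico lo hi) (hd : d ∈ Ico lo hi)
    (hcq : 2 ^ q ∣ c + s) (hdq : 2 ^ q ∣ d + s) : c = d := by
  wlog hcd : c ≤ d generalizing c d
  · exact (this hd hc hdq hcq (by omega)).symm
  by_contra hne
  have hgap : 2 ^ q ≤ d - c := by
    refine Nat.le_of_dvd (by omega) ?_
    simpa [show d + s - (c + s) = d - c by omega] using Nat.dvd_sub hdq hcq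
  -- one of `c + s` and `c + 2 ^ q + s` is divisible by `2 ^ (q + 1)`, and both keys lie in `[c, d]`
  obtain ⟨u, hu⟩ := hcq
  rcases Nat.even_or_odd u with ⟨k, rfl⟩ | ⟨k, rfl⟩
  · exact hI c hc ⟨k, by rw [hu, pow_succ]; ring⟩
  · refine hI (c + 2 ^ q) (by simp only [mem_Ico] at hc hd ⊢; omega) ⟨k + 1, ?_⟩
    rw [pow_succ]; linarith

lemma not_two_pow_succ_dvd_add {K c s : ℕ} (hc : c ∈ Ico 1 (2 ^ K)) (hs : s < 2 ^ K) :
    ¬ 2 ^ (K + 1) ∣ c + s := by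
  simp only [mem_Ico] at hc
  intro h
  have := Nat.eq_zero_of_dvd_of_lt h (by rw [pow_succ]; omega)
  omega

lemma forall_not_two_pow_succ_dvd_of_lt {K n s : ℕ} (hn : n < 2 ^ K) (hs : s < 2 ^ K) :
    ∀ c ∈ Ico 1 (n + 1), ¬ 2 ^ (K + 1) ∣ c + s := fun c hc =>
  not_two_pow_succ_dvd_add (by simp only [mem_Ico] at hc ⊢; omega) hs

lemma mem_Ico_of_mem_uIcc {a b c lo hi : ℕ} (ha : a ∈ Ico lo hi) (hb : b ∈ Ico lo hi)
    (hc : c ∈ uIcc a b) : c ∈ Ico lo hi := by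
  simp only [mem_uIcc, inf_le_iff, le_sup_iff, mem_Ico] at ha hb hc ⊢
  omega

lemma card_filter_dvd_add_mul_le {c : ℕ} (hc : 0 < c) (N p : ℕ) :
    #{s ∈ range N | p ∣ c + s} * p ≤ c + N := by
  refine le_trans (Nat.mul_le_mul_right p ?_) (Nat.div_mul_le_self (c + N) p)
  rw [← Nat.Ioc_filter_dvd_card_eq_div]
  refine card_le_card_of_injOn (c + ·) (fun s hs => ?_) (fun _ _ _ _ h => Nat.add_left_cancel h)
  simp only [coe_filter, mem_range, Set.mem_ofPred_eq, mem_Ioc] at hs ⊢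
  exact ⟨⟨by omega, by omega⟩, hs.2⟩

section DyadicTree

def dyadicPoints (s q lo hi : ℕ) : Finset ℕ := {c ∈ Ico lo hi | 2 ^ q ∣ c + s}

/-- The tree on the keys `[lo, hi)`, meant to be used under the invariant that no key `c` has
`2 ^ (q + 1) ∣ c + s`: then the least `c` with `2 ^ q ∣ c + s` is the only one, and at level `0`
the interval has at most one key. -/
def dyadicTree (s : ℕ) : ℕ → ℕ → ℕ → BTree ℕ
  | 0, lo, hi => if lo + 1 = hi then .node .leaf lo .leaf else .leaf
  | q + 1, lo, hi =>
      if h : (dyadicPoints s (q + 1) lo hi).Nonempty then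
        .node (dyadicTree s q lo ((dyadicPoints s (q + 1) lo hi).min' h))
          ((dyadicPoints s (q + 1) lo hi).min' h)
          (dyadicTree s q ((dyadicPoints s (q + 1) lo hi).min' h + 1) hi)
      else dyadicTree s q lo hi

variable {s : ℕ}

lemma dyadicPoints_min'_spec {q lo hi : ℕ}
    (hI : ∀ c ∈ Ico lo hi, ¬ 2 ^ (q + 2) ∣ c + s) (h : (dyadicPoints s (q + 1) lo hi).Nonempty) :
    let m := (dyadicPoints s (q + 1) lo hi).min' h
    m ∈ Ico lo hi ∧ 2 ^ (q + 1) ∣ m + s ∧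
      (∀ c ∈ Ico lo m, ¬ 2 ^ (q + 1) ∣ c + s) ∧ (∀ c ∈ Ico (m + 1) hi, ¬ 2 ^ (q + 1) ∣ c + s) := by
  intro m
  have hm : m ∈ dyadicPoints s (q + 1) lo hi := min'_mem _ h
  simp only [dyadicPoints, mem_filter] at hm
  refine ⟨hm.1, hm.2, fun c hc hcd => ?_, fun c hc hcd => ?_⟩
  · have hc' : c ∈ Ico lo hi := by simp only [mem_Ico] at hc hm ⊢; omega
    have := min'_le (dyadicPoints s (q + 1) lo hi) c (by simp [dyadicPoints, hc', hcd])
    simp only [mem_Ico] at hc; omega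
  · have hc' : c ∈ Ico lo hi := by simp only [mem_Ico] at hc hm ⊢; omega
    have := eq_of_two_pow_dvd_of_forall_not_dvd hI hc' hm.1 hcd hm.2
    simp only [mem_Ico] at hc; omega

lemma depth_dyadicTree_le (q lo hi a : ℕ) : (dyadicTree s q lo hi).depth a ≤ q + 1 := by
  induction q generalizing lo hi with
  | zero =>
    rw [dyadicTree]
    split_ifs <;> simp only [BTree.depth] <;> (try split_ifs) <;> omega
  | succ q ih =>
    rw [dyadicTree]
    split_ifs with h
    · simp only [BTree.depth]
      split_ifs
      · omega
      · exact Nat.add_le_add_right (ih _ _) 1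
      · exact Nat.add_le_add_right (ih _ _) 1
    · exact (ih lo hi).trans (Nat.le_succ _)

lemma keys_dyadicTree (q lo hi : ℕ) (hI : ∀ c ∈ Ico lo hi, ¬ 2 ^ (q + 1) ∣ c + s) :
    (dyadicTree s q lo hi).keys = Ico lo hi := by
  induction q generalizing lo hi with
  | zero =>
    have hlen : hi ≤ lo + 1 := by
      by_contra! hlt
      have := eq_of_two_pow_dvd_of_forall_not_dvd (q := 0) hI (c := lo) (d := lo + 1)
        (by simp only [mem_Ico]; omega) (by simp only [mem_Ico]; omega) (one_dvd _) (one_dvd _)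
      omega
    rw [dyadicTree]
    split_ifs with h
    · subst h; simp [BTree.keys]
    · exact (Ico_eq_empty (by omega)).symm
  | succ q ih =>
    rw [dyadicTree]
    split_ifs with h
    · obtain ⟨hm, -, hl, hr⟩ := dyadicPoints_min'_spec hI h
      simp only [BTree.keys, ih _ _ hl, ih _ _ hr]
      ext c
      simp only [mem_insert, mem_union, mem_Ico] at hm ⊢
      omega
    · refine ih lo hi fun c hc hcd => h ⟨c, ?_⟩
      simp [dyadicPoints, hc, hcd]

lemma isBST_dyadicTree (q lo hi : ℕ) (hI : ∀ c ∈ Ico lo hi, ¬ 2 ^ (q + 1) ∣ c + s) :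
    (dyadicTree s q lo hi).IsBST := by
  induction q generalizing lo hi with
  | zero =>
    rw [dyadicTree]
    split_ifs <;> simp [BTree.IsBST, BTree.keys]
  | succ q ih =>
    rw [dyadicTree]
    split_ifs with h
    · obtain ⟨hm, -, hl, hr⟩ := dyadicPoints_min'_spec hI h
      refine ⟨fun c hc => ?_, fun c hc => ?_, ih _ _ hl, ih _ _ hr⟩
      · rw [keys_dyadicTree _ _ _ hl, mem_Ico] at hc; omega
      · rw [keys_dyadicTree _ _ _ hr, mem_Ico] at hc; omega
    · refine ih lo hi fun c hc hcd => h ⟨c, ?_⟩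
      simp [dyadicPoints, hc, hcd]

lemma dist_dyadicTree_le (q lo hi : ℕ) (hI : ∀ c ∈ Ico lo hi, ¬ 2 ^ (q + 1) ∣ c + s)
    {a b j : ℕ} (ha : a ∈ Ico lo hi) (hb : b ∈ Ico lo hi)
    (hj : ∀ c ∈ uIcc a b, ¬ 2 ^ (j + 1) ∣ c + s) :
    (dyadicTree s q lo hi).dist a b ≤ 2 * j + 2 := by
  induction q generalizing lo hi with
  | zero =>
    rw [eq_of_two_pow_dvd_of_forall_not_dvd hI ha hb (one_dvd _) (one_dvd _), BTree.dist_self]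
    omega
  | succ q ih =>
    have hda := depth_dyadicTree_le (s := s) (q + 1) lo hi a
    have hdb := depth_dyadicTree_le (s := s) (q + 1) lo hi b
    rw [dyadicTree] at hda hdb ⊢
    split_ifs at hda hdb ⊢ with h
    · obtain ⟨hm, hmd, hl, hr⟩ := dyadicPoints_min'_spec hI h
      simp only [mem_Ico] at ha hb hm
      simp only [BTree.dist]
      split_ifs with hab hlt hgt
      · omega
      · exact ih _ _ hl (by simp only [mem_Ico]; omega) (by simp only [mem_Ico]; omega)
      · exact ih _ _ hr (by simp only [mem_Ico]; omega) (by simp only [mem_Ico]; omega)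
      · -- the root separates `a` and `b`, so `2 ^ (q + 1) ∣ root + s` forces `q + 1 ≤ j`
        have hjq : q + 1 ≤ j := by
          by_contra! hjq
          refine hj _ ?_ ((Nat.pow_dvd_pow 2 (by omega)).trans hmd)
          simp only [mem_uIcc, inf_le_iff, le_sup_iff]
          omega
        omega
    · refine ih lo hi (fun c hc hcd => h ⟨c, ?_⟩) ha hb
      simp [dyadicPoints, hc, hcd]

end DyadicTree

lemma sum_eq_sum_range_card_filter_lt {ι : Type*} (S : Finset ι) (g : ι → ℕ) {M : ℕ}
    (hg : ∀ i ∈ S, g i ≤ M) : ∑ i ∈ S, g i = ∑ j ∈ range M, #{i ∈ S | j < g i} := by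
  have hg' : ∀ i ∈ S, g i = #{j ∈ range M | j < g i} := fun i hi => by
    have hfilter : {j ∈ range M | j < g i} = range (g i) := by
      ext j
      simp only [mem_filter, mem_range]
      have := hg i hi
      omega
    rw [hfilter, card_range]
  rw [sum_congr rfl hg']
  simp only [card_filter]
  exact sum_comm

lemma sum_range_le_of_mul_two_pow_le (f : ℕ → ℕ) {N k : ℕ} (hf : ∀ j, f j ≤ N)
    (hf' : ∀ i, f (k + i) * 2 ^ i ≤ N) (M : ℕ) : ∑ j ∈ range M, f j ≤ N * (k + 2) := by
  have htail : ∑ i ∈ range M, f (k + i) ≤ 2 * N := by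
    have hle : ∀ i, (f (k + i) : ℝ) ≤ N * (1 / 2) ^ i := fun i => by
      rw [one_div, inv_pow, ← div_eq_mul_inv, le_div_iff₀ (by positivity)]
      exact_mod_cast hf' i
    have : (∑ i ∈ range M, f (k + i) : ℝ) ≤ 2 * N := by
      calc (∑ i ∈ range M, f (k + i) : ℝ) ≤ ∑ i ∈ range M, N * (1 / 2 : ℝ) ^ i :=
            sum_le_sum fun i _ => hle i
        _ = N * ∑ i ∈ range M, (1 / 2 : ℝ) ^ i := by rw [mul_sum]
        _ ≤ N * 2 := by gcongr; exact sum_geometric_two_le M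
        _ = 2 * N := mul_comm _ _
    exact_mod_cast this
  calc ∑ j ∈ range M, f j ≤ ∑ j ∈ range (k + M), f j :=
        sum_le_sum_of_subset (range_subset_range.2 (by omega))
    _ = ∑ j ∈ range k, f j + ∑ i ∈ range M, f (k + i) := sum_range_add f k M
    _ ≤ k * N + 2 * N := by
        gcongr
        calc ∑ j ∈ range k, f j ≤ ∑ j ∈ range k, N := sum_le_sum fun j _ => hf j
          _ = k * N := by rw [sum_const, card_range, smul_eq_mul]
    _ = N * (k + 2) := by ring

noncomputable def maxPadicVal (s a b : ℕ) : ℕ := (uIcc a b).sup fun c => padicValNat 2 (c + s)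

section MaxPadicVal

variable {K a b : ℕ}

lemma not_two_pow_maxPadicVal_succ_dvd {s c : ℕ} (hc : c ∈ uIcc a b) (hcs : c + s ≠ 0) :
    ¬ 2 ^ (maxPadicVal s a b + 1) ∣ c + s := by
  rw [padicValNat_dvd_iff_le hcs, not_le, Nat.lt_succ_iff]
  exact le_sup (f := fun c => padicValNat 2 (c + s)) hc

lemma maxPadicVal_le (ha : a ∈ Ico 1 (2 ^ K)) (hb : b ∈ Ico 1 (2 ^ K)) {s : ℕ} (hs : s < 2 ^ K) :
    maxPadicVal s a b ≤ K := by
  refine Finset.sup_le fun c hc => ?_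
  have hc' := mem_Ico_of_mem_uIcc ha hb hc
  by_contra! h
  refine not_two_pow_succ_dvd_add hc' hs ((padicValNat_dvd_iff_le ?_).2 h)
  simp only [mem_Ico] at hc'; omega

lemma card_lt_maxPadicVal_mul_le (ha : a ∈ Ico 1 (2 ^ K)) (hb : b ∈ Ico 1 (2 ^ K)) (j : ℕ) :
    #{s ∈ range (2 ^ K) | j < maxPadicVal s a b} * 2 ^ (j + 1) ≤ #(uIcc a b) * 2 ^ (K + 1) := by
  have hsub : {s ∈ range (2 ^ K) | j < maxPadicVal s a b} ⊆
      (uIcc a b).biUnion fun c => {s ∈ range (2 ^ K) | 2 ^ (j + 1) ∣ c + s} := by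
    intro s hs
    simp only [mem_filter, maxPadicVal, Finset.lt_sup_iff] at hs
    obtain ⟨hs, c, hc, hjc⟩ := hs
    exact mem_biUnion.2 ⟨c, hc, mem_filter.2 ⟨hs, (Nat.pow_dvd_pow 2 hjc).trans pow_padicValNat_dvd⟩⟩
  calc #{s ∈ range (2 ^ K) | j < maxPadicVal s a b} * 2 ^ (j + 1)
      ≤ (∑ c ∈ uIcc a b, #{s ∈ range (2 ^ K) | 2 ^ (j + 1) ∣ c + s}) * 2 ^ (j + 1) :=
        Nat.mul_le_mul_right _ ((card_le_card hsub).trans card_biUnion_le)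
    _ ≤ ∑ c ∈ uIcc a b, 2 ^ (K + 1) := by
        rw [sum_mul]
        refine sum_le_sum fun c hc => ?_
        have hc' := mem_Ico_of_mem_uIcc ha hb hc
        simp only [mem_Ico] at hc'
        refine (card_filter_dvd_add_mul_le (by omega) _ _).trans ?_
        rw [pow_succ]; omega
    _ = #(uIcc a b) * 2 ^ (K + 1) := by rw [sum_const, smul_eq_mul]

lemma sum_maxPadicVal_le (ha : a ∈ Ico 1 (2 ^ K)) (hb : b ∈ Ico 1 (2 ^ K)) :
    ∑ s ∈ range (2 ^ K), maxPadicVal s a b ≤ 2 ^ K * (Nat.log 2 #(uIcc a b) + 3) := by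
  set k := Nat.log 2 #(uIcc a b) + 1
  have hk : #(uIcc a b) ≤ 2 ^ k := (Nat.lt_pow_succ_log_self (by norm_num) _).le
  rw [sum_eq_sum_range_card_filter_lt _ _ (M := K) fun s hs => maxPadicVal_le ha hb
    (mem_range.1 hs)]
  refine sum_range_le_of_mul_two_pow_le _ (fun j => ?_) (fun i => ?_) K
  · exact (card_filter_le _ _).trans (card_range _).le
  · refine Nat.le_of_mul_le_mul_right ?_ (Nat.two_pow_pos (k + 1))
    calc #{s ∈ range (2 ^ K) | k + i < maxPadicVal s a b} * 2 ^ i * 2 ^ (k + 1)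
        = #{s ∈ range (2 ^ K) | k + i < maxPadicVal s a b} * 2 ^ (k + i + 1) := by ring
      _ ≤ #(uIcc a b) * 2 ^ (K + 1) := card_lt_maxPadicVal_mul_le ha hb _
      _ ≤ 2 ^ k * 2 ^ (K + 1) := Nat.mul_le_mul_right _ hk
      _ = 2 ^ K * 2 ^ (k + 1) := by ring

end MaxPadicVal

lemma sum_dist_dyadicTree_le {K n a b : ℕ} (hn : n < 2 ^ K) (ha : a ∈ Icc 1 n) (hb : b ∈ Icc 1 n) :
    ∑ s ∈ range (2 ^ K), (dyadicTree s K 1 (n + 1)).dist a b ≤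
      2 ^ K * (2 * Nat.log 2 #(uIcc a b) + 8) := by
  simp only [mem_Icc] at ha hb
  have hQ := sum_maxPadicVal_le (K := K) (a := a) (b := b)
    (by simp only [mem_Ico]; omega) (by simp only [mem_Ico]; omega)
  calc ∑ s ∈ range (2 ^ K), (dyadicTree s K 1 (n + 1)).dist a b
      ≤ ∑ s ∈ range (2 ^ K), (2 * maxPadicVal s a b + 2) := by
        refine sum_le_sum fun s hs => dist_dyadicTree_le K 1 (n + 1)
          (forall_not_two_pow_succ_dvd_of_lt hn (mem_range.1 hs))
          (by simp only [mem_Ico]; omega) (by simp only [mem_Ico]; omega)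
          fun c hc => not_two_pow_maxPadicVal_succ_dvd hc ?_
        simp only [mem_uIcc, inf_le_iff] at hc
        omega
    _ = 2 * ∑ s ∈ range (2 ^ K), maxPadicVal s a b + 2 ^ K * 2 := by
        rw [sum_add_distrib, ← mul_sum, sum_const, card_range, smul_eq_mul]
    _ ≤ 2 ^ K * (2 * Nat.log 2 #(uIcc a b) + 8) := by linarith

lemma exists_sum_dist_dyadicTree_le {ι : Type*} (S : Finset ι) (a b : ι → ℕ) {K n : ℕ}
    (hn : n < 2 ^ K) (hab : ∀ t ∈ S, a t ∈ Icc 1 n ∧ b t ∈ Icc 1 n) :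
    ∃ s < 2 ^ K, ∑ t ∈ S, (dyadicTree s K 1 (n + 1)).dist (a t) (b t) ≤
      ∑ t ∈ S, (2 * Nat.log 2 #(uIcc (a t) (b t)) + 8) := by
  obtain ⟨s, hs, h⟩ := exists_le_of_sum_le (nonempty_range_iff.2 (Nat.two_pow_pos K).ne') <|
    calc ∑ s ∈ range (2 ^ K), ∑ t ∈ S, (dyadicTree s K 1 (n + 1)).dist (a t) (b t)
        = ∑ t ∈ S, ∑ s ∈ range (2 ^ K), (dyadicTree s K 1 (n + 1)).dist (a t) (b t) := sum_comm
      _ ≤ ∑ t ∈ S, 2 ^ K * (2 * Nat.log 2 #(uIcc (a t) (b t)) + 8) :=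
        sum_le_sum fun t ht => sum_dist_dyadicTree_le hn (hab t ht).1 (hab t ht).2
      _ = ∑ _s ∈ range (2 ^ K), ∑ t ∈ S, (2 * Nat.log 2 #(uIcc (a t) (b t)) + 8) := by
        rw [← mul_sum, sum_const, card_range, smul_eq_mul]
  exact ⟨s, mem_range.1 hs, h⟩

lemma distTreeBound_le {T : BTree ℕ} {l m : ℕ} (hl : 1 ≤ l) (r : ℕ) (x p : ℕ → ℕ)
    (hp : ∀ t ∈ Icc 2 m, max 1 (t - l) ≤ p t ∧ p t < t) :
    distTreeBound T l m (fun i => if i = 0 then r else x i) ≤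
      T.dist (x 1) r + 1 + ∑ t ∈ Icc 2 m, (T.dist (x t) (x (p t)) + 1) := by
  unfold distTreeBound
  calc _ ≤ ∑ i ∈ insert 1 (Icc 2 m), sInf {d | ∃ j, i - l ≤ j ∧ j < i ∧
          d = T.dist (if i = 0 then r else x i) (if j = 0 then r else x j) + 1} :=
        sum_le_sum_of_subset fun i hi => by simp only [mem_insert, mem_Icc] at hi ⊢; omega
    _ = _ := sum_insert (by simp)
    _ ≤ _ := by
        refine add_le_add (Nat.sInf_le ⟨0, by omega, one_pos, by simp⟩)
          (sum_le_sum fun t ht => Nat.sInf_le ⟨p t, by have := hp t ht; omega, (hp t ht).2, ?_⟩)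
        have := hp t ht
        simp only [mem_Icc] at ht
        simp only [if_neg (show t ≠ 0 by omega), if_neg (show p t ≠ 0 by omega)]

theorem exists_isBST_distTreeBound_le {l n m : ℕ} (hl : 1 ≤ l) (hn : 1 ≤ n) (x p : ℕ → ℕ)
    (hx : ∀ i, 1 ≤ i → i ≤ m → x i ∈ Icc 1 n)
    (hp : ∀ t ∈ Icc 2 m, max 1 (t - l) ≤ p t ∧ p t < t) :
    ∃ (T : BTree ℕ) (r : ℕ), T.IsBST ∧ T.keys = Icc 1 n ∧ T.root? = some r ∧
      distTreeBound T l m (fun i => if i = 0 then r else x i) ≤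
        Nat.log 2 n + 3 + ∑ t ∈ Icc 2 m, (2 * Nat.log 2 #(uIcc (x t) (x (p t))) + 8 + 1) := by
  set K := Nat.log 2 n + 1
  have hK : n < 2 ^ K := Nat.lt_pow_succ_log_self one_lt_two n
  obtain ⟨s, hs, hsum⟩ := exists_sum_dist_dyadicTree_le (Icc 2 m) x (fun t => x (p t)) hK
    fun t ht => by
      have := hp t ht
      simp only [mem_Icc] at ht
      exact ⟨hx t (by omega) ht.2, hx (p t) (by omega) (by omega)⟩
  have hI := forall_not_two_pow_succ_dvd_of_lt hK hs
  have hkeys := keys_dyadicTree K 1 (n + 1) hI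
  rw [Ico_add_one_right_eq_Icc] at hkeys
  obtain ⟨L, r, R, hT⟩ := BTree.exists_eq_node_of_mem_keys (hkeys ▸ left_mem_Icc.2 hn)
  refine ⟨_, r, isBST_dyadicTree K 1 (n + 1) hI, hkeys, by rw [hT]; rfl, ?_⟩
  have hroot : (dyadicTree s K 1 (n + 1)).dist (x 1) r ≤ K + 1 := by
    rw [hT, BTree.dist_root, ← hT]
    exact depth_dyadicTree_le K 1 (n + 1) (x 1)
  refine (distTreeBound_le hl r x p hp).trans (add_le_add (by omega) ?_)
  rw [sum_add_distrib, sum_add_distrib]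
  exact Nat.add_le_add_right hsum _

lemma one_le_logb_two {y : ℝ} (hy : 2 ≤ y) : 1 ≤ Real.logb 2 y := by
  rw [← Real.logb_self_eq_one one_lt_two]
  exact Real.logb_le_logb_of_le one_lt_two two_pos hy

lemma natLog_card_uIcc_le_logb (a b : ℕ) :
    (Nat.log 2 #(uIcc a b) : ℝ) ≤ Real.logb 2 (|(a : ℝ) - b| + 2) := by
  refine (Real.natLog_le_logb _ _).trans
    (Real.logb_le_logb_of_le one_lt_two (Nat.cast_pos.2 (card_pos.2 nonempty_uIcc)) ?_)
  rw [Nat.card_uIcc, Nat.cast_add, Nat.cast_natAbs, Int.cast_abs, abs_sub_comm]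
  push_cast
  linarith

lemma exists_csInf_eq_apply_of_lt (f : ℕ → ℝ) {a b : ℕ} (h : a < b) :
    ∃ t, a ≤ t ∧ t < b ∧ sInf {y | ∃ t, a ≤ t ∧ t < b ∧ y = f t} = f t := by
  have hS : {y | ∃ t, a ≤ t ∧ t < b ∧ y = f t} = f '' Set.Ico a b := by
    ext y; simp [eq_comm, and_assoc]
  have := ((Set.nonempty_Ico.2 h).image f).csInf_mem ((Set.finite_Ico a b).image f)
  rwa [← hS] at this

/-- There is an absolute constant `c` such that for every `ℓ ≥ 1`, `n ≥ 2`,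
and every access sequence `x 1, …, x m ∈ [n]`, there is a BST `T` on `[n]` (with root key `root`)
with `ℓ-DistTree_T(X) ≤ c·( Σ_{t=2}^m min_{max(1, t−ℓ) ≤ t' < t} log₂(|x t − x t'| + 2) + log₂ n )`. -/
theorem stmt1 : ∃ c : ℝ, ∀ (l n m : ℕ), 1 ≤ l → 2 ≤ n →
    ∀ x : ℕ → ℕ, (∀ i, 1 ≤ i → i ≤ m → x i ∈ Finset.Icc 1 n) →
    ∃ (T : BTree ℕ) (root : ℕ), T.IsBST ∧ T.keys = Finset.Icc 1 n ∧ T.root? = some root ∧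
      (distTreeBound T l m (fun i => if i = 0 then root else x i) : ℝ) ≤
        c * ((∑ t ∈ Finset.Icc 2 m,
              sInf {y : ℝ | ∃ t', max 1 (t - l) ≤ t' ∧ t' < t ∧
                y = Real.logb 2 (|(x t : ℝ) - (x t' : ℝ)| + 2)}) +
            Real.logb 2 n) := by
  refine ⟨11, fun l n m hl hn x hx => ?_⟩
  choose! p hp using fun t (ht : t ∈ Icc 2 m) =>
    exists_csInf_eq_apply_of_lt (fun t' => Real.logb 2 (|(x t : ℝ) - (x t' : ℝ)| + 2))
      (a := max 1 (t - l)) (b := t) (by simp only [mem_Icc] at ht; omega)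
  obtain ⟨T, r, hbst, hkeys, hr, hle⟩ := exists_isBST_distTreeBound_le hl (by omega) x p hx
    fun t ht => ⟨(hp t ht).1, (hp t ht).2.1⟩
  refine ⟨T, r, hbst, hkeys, hr, ?_⟩
  have hlogn : (Nat.log 2 n : ℝ) + 3 ≤ 4 * Real.logb 2 n := by
    have h : (Nat.log 2 n : ℝ) ≤ Real.logb 2 n := mod_cast Real.natLog_le_logb n 2
    linarith [one_le_logb_two (y := n) (by exact_mod_cast hn)]
  have hterm : ∀ t ∈ Icc 2 m, (2 * Nat.log 2 #(uIcc (x t) (x (p t))) + 8 + 1 : ℝ) ≤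
      11 * sInf {y : ℝ | ∃ t', max 1 (t - l) ≤ t' ∧ t' < t ∧
        y = Real.logb 2 (|(x t : ℝ) - (x t' : ℝ)| + 2)} := fun t ht => by
    rw [(hp t ht).2.2]
    linarith [natLog_card_uIcc_le_logb (x t) (x (p t)),
      one_le_logb_two (le_add_of_nonneg_left (abs_nonneg ((x t : ℝ) - x (p t))))]
  calc (distTreeBound T l m (fun i => if i = 0 then r else x i) : ℝ)
      ≤ (Nat.log 2 n : ℝ) + 3 +
          ∑ t ∈ Icc 2 m, (2 * Nat.log 2 #(uIcc (x t) (x (p t))) + 8 + 1 : ℝ) := mod_cast hle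
    _ ≤ _ := by
        rw [mul_add, mul_sum]
        linarith [sum_le_sum hterm]
end

section
/- There exists a constant c such that for every integer n ≥ 1 and all positive real weights w_1,…,w_n with W = Σ_{i=1}^n w_i, there exists a binary search tree T on [n] in which, for every i ∈ [n], the depth of the node labeled i (its edge-distance from the root) is at most c·(log₂(W / w_i) + 1). -/
open Finset

namespace Stmt7Aux

/-- The filter set used for the weighted median. -/
noncomputable def medF (w : ℕ → ℝ) (lo hi : ℕ) : Finset ℕ :=
  letI := Classical.decPred
    (fun r => (∑ j ∈ Finset.Icc lo hi, w j) / 2 ≤ ∑ j ∈ Finset.Icc lo r, w j)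
  (Finset.Icc lo hi).filter
    (fun r => (∑ j ∈ Finset.Icc lo hi, w j) / 2 ≤ ∑ j ∈ Finset.Icc lo r, w j)

/-- The weighted median of `w` on `[lo, hi]`. -/
noncomputable def med (w : ℕ → ℝ) (lo hi : ℕ) : ℕ :=
  if h : (medF w lo hi).Nonempty then (medF w lo hi).min' h else lo

lemma mem_medF {w : ℕ → ℝ} {lo hi r : ℕ} :
    r ∈ medF w lo hi ↔ r ∈ Finset.Icc lo hi ∧
      (∑ j ∈ Finset.Icc lo hi, w j) / 2 ≤ ∑ j ∈ Finset.Icc lo r, w j := by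
  classical
  simp [medF, Finset.mem_filter]

lemma med_mem {w : ℕ → ℝ} {lo hi : ℕ} (h : lo ≤ hi) :
    med w lo hi ∈ Finset.Icc lo hi := by
  unfold med
  split
  · exact (mem_medF.mp (Finset.min'_mem _ _)).1
  · simp [Finset.mem_Icc, h]

lemma sum_Icc_split {w : ℕ → ℝ} {lo r hi : ℕ} (h1 : lo ≤ r) (h2 : r ≤ hi) :
    ∑ j ∈ Finset.Icc lo hi, w j =
      (∑ j ∈ Finset.Icc lo r, w j) + ∑ j ∈ Finset.Icc (r + 1) hi, w j := by
  have hset : Finset.Icc lo hi = Finset.Icc lo r ∪ Finset.Icc (r + 1) hi := by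
    ext x; simp only [Finset.mem_Icc, Finset.mem_union]; omega
  have hdisj : Disjoint (Finset.Icc lo r) (Finset.Icc (r + 1) hi) := by
    rw [Finset.disjoint_left]
    intro a ha hb
    simp only [Finset.mem_Icc] at ha hb
    omega
  rw [hset, Finset.sum_union hdisj]

lemma sum_nonneg' {w : ℕ → ℝ} {lo hi : ℕ}
    (hpos : ∀ j ∈ Finset.Icc lo hi, 0 < w j) :
    0 ≤ ∑ j ∈ Finset.Icc lo hi, w j :=
  Finset.sum_nonneg fun j hj => (hpos j hj).le

lemma medF_nonempty {w : ℕ → ℝ} {lo hi : ℕ} (h : lo ≤ hi)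
    (hpos : ∀ j ∈ Finset.Icc lo hi, 0 < w j) : (medF w lo hi).Nonempty := by
  refine ⟨hi, mem_medF.mpr ⟨?_, ?_⟩⟩
  · simp [Finset.mem_Icc, h]
  · exact half_le_self (sum_nonneg' hpos)

lemma med_left {w : ℕ → ℝ} {lo hi : ℕ} (h : lo ≤ hi) (hlo : 1 ≤ lo)
    (hpos : ∀ j ∈ Finset.Icc lo hi, 0 < w j) :
    ∑ j ∈ Finset.Icc lo (med w lo hi - 1), w j ≤ (∑ j ∈ Finset.Icc lo hi, w j) / 2 := by
  set r := med w lo hi with hr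
  have hmem := med_mem (w := w) h
  rw [← hr] at hmem
  rw [Finset.mem_Icc] at hmem
  rcases eq_or_lt_of_le hmem.1 with heq | hlt
  · rw [← heq]
    have : Finset.Icc lo (lo - 1) = ∅ := by
      apply Finset.Icc_eq_empty; omega
    rw [this]
    simp only [Finset.sum_empty]
    have := sum_nonneg' hpos
    linarith
  · by_contra hcon
    push_neg at hcon
    have hrm : r - 1 ∈ medF w lo hi := mem_medF.mpr ⟨by simp [Finset.mem_Icc]; omega, hcon.le⟩
    have hne := medF_nonempty h hpos
    have hle : med w lo hi ≤ r - 1 := by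
      rw [med, dif_pos hne]
      exact Finset.min'_le _ _ hrm
    omega

lemma med_right {w : ℕ → ℝ} {lo hi : ℕ} (h : lo ≤ hi)
    (hpos : ∀ j ∈ Finset.Icc lo hi, 0 < w j) :
    ∑ j ∈ Finset.Icc (med w lo hi + 1) hi, w j ≤ (∑ j ∈ Finset.Icc lo hi, w j) / 2 := by
  set r := med w lo hi with hr
  have hmem := med_mem (w := w) h
  rw [← hr, Finset.mem_Icc] at hmem
  have hne := medF_nonempty h hpos
  have hrmem : r ∈ medF w lo hi := by
    rw [hr, med, dif_pos hne]; exact Finset.min'_mem _ _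
  have hhalf := (mem_medF.mp hrmem).2
  have hsplit := sum_Icc_split (w := w) hmem.1 hmem.2
  linarith

/-- The weight-balanced BST on `[lo, hi]`. -/
noncomputable def build (w : ℕ → ℝ) (lo hi : ℕ) : BTree ℕ :=
  if h : lo ≤ hi then
    BTree.node
      (if hlr : lo < med w lo hi then build w lo (med w lo hi - 1) else BTree.leaf)
      (med w lo hi)
      (build w (med w lo hi + 1) hi)
  else BTree.leaf
termination_by hi + 1 - lo
decreasing_by
  · have := Finset.mem_Icc.mp (med_mem (w := w) h); omega
  · have := Finset.mem_Icc.mp (med_mem (w := w) h); omega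

lemma build_keys (w : ℕ → ℝ) (lo hi : ℕ) (hlo : 1 ≤ lo) :
    (build w lo hi).keys = Finset.Icc lo hi := by
  rw [build]
  split
  · next h =>
    have hm := Finset.mem_Icc.mp (med_mem (w := w) h)
    have hkR : (build w (med w lo hi + 1) hi).keys = Finset.Icc (med w lo hi + 1) hi :=
      build_keys w _ hi (by omega)
    split
    · next hlr =>
      have hkL : (build w lo (med w lo hi - 1)).keys = Finset.Icc lo (med w lo hi - 1) :=
        build_keys w lo _ hlo
      rw [BTree.keys, hkL, hkR]
      ext x
      simp only [Finset.mem_insert, Finset.mem_union, Finset.mem_Icc]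
      omega
    · next hlr =>
      rw [BTree.keys, hkR, BTree.keys]
      ext x
      simp only [Finset.mem_insert, Finset.mem_union, Finset.mem_Icc, Finset.notMem_empty,
        false_or]
      omega
  · next h =>
    rw [BTree.keys]
    exact (Finset.Icc_eq_empty (by omega)).symm
termination_by hi + 1 - lo
decreasing_by
  all_goals omega

lemma build_isBST (w : ℕ → ℝ) (lo hi : ℕ) (hlo : 1 ≤ lo) :
    (build w lo hi).IsBST := by
  rw [build]
  split
  · next h =>
    have hm := Finset.mem_Icc.mp (med_mem (w := w) h)
    refine ⟨?_, ?_, ?_, ?_⟩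
    · intro y hy
      split at hy
      · next hlr =>
        rw [build_keys w lo _ hlo, Finset.mem_Icc] at hy
        omega
      · simp [BTree.keys] at hy
    · intro y hy
      rw [build_keys w _ hi (by omega), Finset.mem_Icc] at hy
      omega
    · split
      · exact build_isBST w lo _ hlo
      · trivial
    · exact build_isBST w _ hi (by omega)
  · trivial
termination_by hi + 1 - lo
decreasing_by
  all_goals omega

lemma build_depth_bound (w : ℕ → ℝ) (lo hi : ℕ) (hlo : 1 ≤ lo)
    (hpos : ∀ j ∈ Finset.Icc lo hi, 0 < w j) :
    ∀ i ∈ Finset.Icc lo hi,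
      w i * 2 ^ ((build w lo hi).depth i) ≤ ∑ j ∈ Finset.Icc lo hi, w j := by
  intro i hi'
  have h : lo ≤ hi := by
    rw [Finset.mem_Icc] at hi'; omega
  have hm := Finset.mem_Icc.mp (med_mem (w := w) h)
  rw [Finset.mem_Icc] at hi'
  rw [build]
  rw [dif_pos h]
  set r := med w lo hi with hr
  rcases lt_trichotomy i r with hir | hir | hir
  · -- left subtree
    have hlr : lo < r := by omega
    rw [BTree.depth, if_neg (by omega), if_pos hir, dif_pos hlr]
    have hIH := build_depth_bound w lo (r - 1) hlo
      (fun j hj => hpos j (by rw [Finset.mem_Icc] at hj ⊢; omega))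
      i (by rw [Finset.mem_Icc]; omega)
    have hL := med_left h hlo hpos
    rw [← hr] at hL
    calc w i * 2 ^ ((build w lo (r - 1)).depth i + 1)
        = (w i * 2 ^ ((build w lo (r - 1)).depth i)) * 2 := by ring
      _ ≤ ((∑ j ∈ Finset.Icc lo hi, w j) / 2) * 2 := by
          have := le_trans hIH hL
          nlinarith [this]
      _ = ∑ j ∈ Finset.Icc lo hi, w j := by ring
  · -- root
    rw [BTree.depth, if_pos hir]
    simp only [pow_zero, mul_one]
    have := Finset.single_le_sum (f := w) (fun j hj => (hpos j hj).le)
      (Finset.mem_Icc.mpr ⟨hi'.1, hi'.2⟩)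
    exact this
  · -- right subtree
    rw [BTree.depth, if_neg (by omega), if_neg (by omega)]
    have hIH := build_depth_bound w (r + 1) hi (by omega)
      (fun j hj => hpos j (by rw [Finset.mem_Icc] at hj ⊢; omega))
      i (by rw [Finset.mem_Icc]; omega)
    have hR := med_right h hpos
    rw [← hr] at hR
    calc w i * 2 ^ ((build w (r + 1) hi).depth i + 1)
        = (w i * 2 ^ ((build w (r + 1) hi).depth i)) * 2 := by ring
      _ ≤ ((∑ j ∈ Finset.Icc lo hi, w j) / 2) * 2 := by
          have := le_trans hIH hR
          nlinarith [this]
      _ = ∑ j ∈ Finset.Icc lo hi, w j := by ring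
termination_by hi + 1 - lo
decreasing_by
  all_goals omega

end Stmt7Aux

/-- There is a constant `c` such that for every `n ≥ 1` and all positive
weights `w 1, …, w n` with total weight `W`, there is a BST `T` on `[n]` in which every key
`i` has depth at most `c·(log₂(W / w i) + 1)`. -/
theorem stmt7 : ∃ c : ℝ, ∀ n : ℕ, 1 ≤ n → ∀ w : ℕ → ℝ,
    (∀ i, 1 ≤ i → i ≤ n → 0 < w i) →
    ∃ T : BTree ℕ, T.IsBST ∧ T.keys = Finset.Icc 1 n ∧
      ∀ i, 1 ≤ i → i ≤ n →
        (T.depth i : ℝ) ≤ c * (Real.logb 2 ((∑ j ∈ Finset.Icc 1 n, w j) / w i) + 1) := by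
  refine ⟨1, fun n hn w hw => ?_⟩
  have hpos : ∀ j ∈ Finset.Icc 1 n, 0 < w j := fun j hj => by
    rw [Finset.mem_Icc] at hj; exact hw j hj.1 hj.2
  refine ⟨Stmt7Aux.build w 1 n, Stmt7Aux.build_isBST w 1 n le_rfl,
    Stmt7Aux.build_keys w 1 n le_rfl, fun i hi1 hin => ?_⟩
  have hmem : i ∈ Finset.Icc 1 n := Finset.mem_Icc.mpr ⟨hi1, hin⟩
  have hwi : 0 < w i := hpos i hmem
  have hbd := Stmt7Aux.build_depth_bound w 1 n le_rfl hpos i hmem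
  set d := (Stmt7Aux.build w 1 n).depth i with hd
  set W := ∑ j ∈ Finset.Icc 1 n, w j with hW
  have hdiv : (2 : ℝ) ^ d ≤ W / w i := by
    rw [le_div_iff₀ hwi]
    linarith [hbd]
  have hWpos : 0 < W / w i := by
    have h2 : (0:ℝ) < 2 ^ d := by positivity
    linarith
  have hlog : (d : ℝ) ≤ Real.logb 2 (W / w i) := by
    rw [Real.le_logb_iff_rpow_le one_lt_two hWpos, Real.rpow_natCast]
    exact hdiv
  linarith
end

section
/- Let X = (x_1,…,x_m) ∈ [n]^m be a sequence that can be partitioned into k increasing subsequences (i.e., there is a map g : {1,…,m} → {1,…,k} such that for all s < t with g(s) = g(t) one has x_s ≤ x_t). Then for every binary search tree T on [n], the k-finger cost satisfies F^k_T(X) ≤ m + 2k(n−1). -/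
lemma bdist_self (T : BTree ℕ) (a : ℕ) : T.dist a a = 0 := by
  cases T <;> simp [BTree.dist]

lemma depth_node_lt {l r : BTree ℕ} {x a : ℕ} (h : a < x) :
    (BTree.node l x r).depth a = l.depth a + 1 := by
  simp [BTree.depth, h, Nat.ne_of_lt h]

lemma depth_node_gt {l r : BTree ℕ} {x a : ℕ} (h : x < a) :
    (BTree.node l x r).depth a = r.depth a + 1 := by
  have h1 : ¬ a = x := by omega
  have h2 : ¬ a < x := by omega
  simp [BTree.depth, h1, h2]

lemma depth_node_self {l r : BTree ℕ} {x : ℕ} : (BTree.node l x r).depth x = 0 := by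
  simp [BTree.depth]

lemma dist_node_lt {l r : BTree ℕ} {x a b : ℕ} (h1 : a < x) (h2 : b < x) :
    (BTree.node l x r).dist a b = l.dist a b := by
  rcases eq_or_ne a b with rfl | h
  · simp [bdist_self]
  · rw [BTree.dist, if_neg h, if_pos ⟨h1, h2⟩]

lemma dist_node_gt {l r : BTree ℕ} {x a b : ℕ} (h1 : x < a) (h2 : x < b) :
    (BTree.node l x r).dist a b = r.dist a b := by
  rcases eq_or_ne a b with rfl | h
  · simp [bdist_self]
  · have h3 : ¬ (a < x ∧ b < x) := by omega
    rw [BTree.dist, if_neg h, if_neg h3, if_pos ⟨h1, h2⟩]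

lemma dist_node_split {l r : BTree ℕ} {x a b : ℕ} (hab : a ≠ b)
    (h1 : ¬ (a < x ∧ b < x)) (h2 : ¬ (x < a ∧ x < b)) :
    (BTree.node l x r).dist a b = (BTree.node l x r).depth a + (BTree.node l x r).depth b := by
  rw [BTree.dist, if_neg hab, if_neg h1, if_neg h2]


lemma bdist_comm (T : BTree ℕ) (a b : ℕ) : T.dist a b = T.dist b a := by
  induction T with
  | leaf => rfl
  | node l x r ihl ihr =>
    rcases eq_or_ne a b with rfl | hab
    · rfl
    by_cases h1 : a < x ∧ b < x
    · rw [dist_node_lt h1.1 h1.2, dist_node_lt h1.2 h1.1, ihl]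
    by_cases h2 : x < a ∧ x < b
    · rw [dist_node_gt h2.1 h2.2, dist_node_gt h2.2 h2.1, ihr]
    · rw [dist_node_split hab h1 h2, dist_node_split hab.symm (by omega) (by omega), Nat.add_comm]

lemma depth_lipschitz (T : BTree ℕ) (a b : ℕ) : T.depth a ≤ T.dist a b + T.depth b := by
  induction T with
  | leaf => simp [BTree.depth]
  | node l x r ihl ihr =>
    rcases eq_or_ne a b with rfl | hab
    · simp [bdist_self]
    by_cases h1 : a < x ∧ b < x
    · rw [dist_node_lt h1.1 h1.2, depth_node_lt h1.1, depth_node_lt h1.2]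
      have := ihl; omega
    by_cases h2 : x < a ∧ x < b
    · rw [dist_node_gt h2.1 h2.2, depth_node_gt h2.1, depth_node_gt h2.2]
      have := ihr; omega
    · rw [dist_node_split hab h1 h2]; omega

lemma bdist_triangle (T : BTree ℕ) (a b c : ℕ) (hab : a ≤ b) (hbc : b ≤ c) :
    T.dist a c ≤ T.dist a b + T.dist b c := by
  induction T with
  | leaf => simp [BTree.dist]
  | node l x r ihl ihr =>
    rcases eq_or_lt_of_le hab with rfl | hab'
    · simp [bdist_self]
    rcases eq_or_lt_of_le hbc with rfl | hbc'
    · simp [bdist_self]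
    have hac : a < c := lt_trans hab' hbc'
    by_cases hc : c < x
    · -- all < x
      have hbx : b < x := lt_trans hbc' hc
      have hax : a < x := lt_trans hab' hbx
      rw [dist_node_lt hax hc, dist_node_lt hax hbx, dist_node_lt hbx hc]
      exact ihl
    by_cases ha : x < a
    · have hbx : x < b := lt_trans ha hab'
      have hcx : x < c := lt_trans hbx hbc'
      rw [dist_node_gt ha hcx, dist_node_gt ha hbx, dist_node_gt hbx hcx]
      exact ihr
    -- a ≤ x ≤ c
    push_neg at hc ha
    rw [dist_node_split (Nat.ne_of_lt hac) (by omega) (by omega)]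
    rcases lt_trichotomy b x with hb | rfl | hb
    · -- b < x, so a < x
      have hax : a < x := lt_trans hab' hb
      rw [dist_node_lt hax hb, dist_node_split (Nat.ne_of_lt hbc') (by omega) (by omega)]
      rw [depth_node_lt hax, depth_node_lt hb]
      have := depth_lipschitz l a b
      omega
    · rw [dist_node_split (Nat.ne_of_lt hab') (by omega) (by omega),
        dist_node_split (Nat.ne_of_lt hbc') (by omega) (by omega), depth_node_self]
      omega
    · -- x < b, so x < c
      have hcx : x < c := lt_trans hb hbc'
      rw [dist_node_gt hb hcx, dist_node_split (Nat.ne_of_lt hab') (by omega) (by omega)]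
      rw [depth_node_gt hb, depth_node_gt hcx]
      have := depth_lipschitz r c b
      have hsym : r.dist c b = r.dist b c := bdist_comm r c b
      omega

lemma chain_sum (T : BTree ℕ) (hbst : T.IsBST) :
    ∀ a b : ℕ, a ≤ b → T.keys = Finset.Icc a b →
      (∑ i ∈ Finset.Ico a b, T.dist i (i + 1)) + T.depth a + T.depth b ≤ 2 * (b - a) := by
  induction T with
  | leaf =>
    intro a b hab hk
    exfalso
    have : a ∈ (BTree.leaf : BTree ℕ).keys := by
      rw [hk]; simp [Finset.mem_Icc]; omega
    simpa [BTree.keys] using this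
  | node l x r ihl ihr =>
    intro a b hab hk
    obtain ⟨h_l, h_r, bl, br⟩ := hbst
    have hxmem : x ∈ Finset.Icc a b := by
      rw [← hk]; simp [BTree.keys]
    rw [Finset.mem_Icc] at hxmem
    have hmem : ∀ y : ℕ, y ∈ l.keys ∨ y = x ∨ y ∈ r.keys ↔ a ≤ y ∧ y ≤ b := by
      intro y
      constructor
      · intro hy
        have : y ∈ (BTree.node l x r).keys := by
          simp [BTree.keys]; tauto
        rw [hk, Finset.mem_Icc] at this; exact this
      · intro hy
        have : y ∈ (BTree.node l x r).keys := by
          rw [hk, Finset.mem_Icc]; exact hy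
        simp [BTree.keys] at this; tauto
    have hkl : l.keys = Finset.Ico a x := by
      ext y
      rw [Finset.mem_Ico]
      constructor
      · intro hy
        have h1 := h_l y hy
        have h2 := (hmem y).1 (Or.inl hy)
        omega
      · intro hy
        have := (hmem y).2 ⟨hy.1, by omega⟩
        rcases this with h | h | h
        · exact h
        · omega
        · have := h_r y h; omega
    have hkr : r.keys = Finset.Ioc x b := by
      ext y
      rw [Finset.mem_Ioc]
      constructor
      · intro hy
        have h1 := h_r y hy
        have h2 := (hmem y).1 (Or.inr (Or.inr hy))
        omega
      · intro hy
        have := (hmem y).2 ⟨by omega, hy.2⟩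
        rcases this with h | h | h
        · have := h_l y h; omega
        · omega
        · exact h
    have hda : (BTree.node l x r).depth a = if a = x then 0 else l.depth a + 1 := by
      rcases eq_or_lt_of_le hxmem.1 with rfl | h
      · simp [depth_node_self]
      · rw [if_neg (by omega), depth_node_lt h]
    have hdb : (BTree.node l x r).depth b = if b = x then 0 else r.depth b + 1 := by
      rcases eq_or_lt_of_le hxmem.2 with rfl | h
      · simp [depth_node_self]
      · rw [if_neg (by omega), depth_node_gt h]
    -- left part
    have Hl : (∑ i ∈ Finset.Ico a x, (BTree.node l x r).dist i (i + 1)) + l.depth a + 1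
        ≤ 2 * (x - a) ∨ a = x := by
      rcases eq_or_lt_of_le hxmem.1 with rfl | h
      · right; rfl
      left
      have hx1 : x = (x - 1) + 1 := by omega
      have hsplit : ∑ i ∈ Finset.Ico a x, (BTree.node l x r).dist i (i + 1)
          = (∑ i ∈ Finset.Ico a (x-1), (BTree.node l x r).dist i (i + 1))
            + (BTree.node l x r).dist (x-1) ((x-1)+1) := by
        rw [hx1]; exact Finset.sum_Ico_succ_top (by omega) _
      have hcong : ∑ i ∈ Finset.Ico a (x-1), (BTree.node l x r).dist i (i + 1)
          = ∑ i ∈ Finset.Ico a (x-1), l.dist i (i + 1) := by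
        apply Finset.sum_congr rfl
        intro i hi
        rw [Finset.mem_Ico] at hi
        exact dist_node_lt (by omega) (by omega)
      have htop : (BTree.node l x r).dist (x-1) ((x-1)+1) = l.depth (x-1) + 1 := by
        rw [show (x-1)+1 = x by omega, dist_node_split (by omega) (by omega) (by omega),
          depth_node_lt (by omega), depth_node_self]
      have hIH := ihl bl a (x-1) (by omega) (by rw [hkl, ← Finset.Ico_add_one_right_eq_Icc]; congr 1 <;> omega)
      rw [hsplit, hcong, htop]
      omega
    -- right part
    have Hr : (∑ i ∈ Finset.Ico x b, (BTree.node l x r).dist i (i + 1)) + r.depth b + 1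
        ≤ 2 * (b - x) ∨ x = b := by
      rcases eq_or_lt_of_le hxmem.2 with rfl | h
      · right; rfl
      left
      have hsplit : ∑ i ∈ Finset.Ico x b, (BTree.node l x r).dist i (i + 1)
          = (BTree.node l x r).dist x (x+1)
            + ∑ i ∈ Finset.Ico (x+1) b, (BTree.node l x r).dist i (i + 1) := by
        exact Finset.sum_eq_sum_Ico_succ_bot h _
      have hcong : ∑ i ∈ Finset.Ico (x+1) b, (BTree.node l x r).dist i (i + 1)
          = ∑ i ∈ Finset.Ico (x+1) b, r.dist i (i + 1) := by
        apply Finset.sum_congr rfl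
        intro i hi
        rw [Finset.mem_Ico] at hi
        exact dist_node_gt (by omega) (by omega)
      have hbot : (BTree.node l x r).dist x (x+1) = r.depth (x+1) + 1 := by
        rw [dist_node_split (by omega) (by omega) (by omega), depth_node_self,
          depth_node_gt (show x < x + 1 by omega), Nat.zero_add]
      have hIH := ihr br (x+1) b (by omega) (by rw [hkr, ← Finset.Icc_add_one_left_eq_Ioc])
      rw [hsplit, hcong, hbot]
      omega
    have hsum : ∑ i ∈ Finset.Ico a b, (BTree.node l x r).dist i (i + 1)
        = (∑ i ∈ Finset.Ico a x, (BTree.node l x r).dist i (i + 1))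
          + ∑ i ∈ Finset.Ico x b, (BTree.node l x r).dist i (i + 1) := by
      rw [Finset.sum_Ico_consecutive _ hxmem.1 hxmem.2]
    rw [hsum, hda, hdb]
    rcases Hl with Hl | rfl <;> rcases Hr with Hr | h
    · rw [if_neg (by omega), if_neg (by omega)]; omega
    · subst h; rw [if_neg (by omega), if_pos rfl]; simp at Hl ⊢; omega
    · rw [if_pos rfl, if_neg (by omega)]; simp at Hr ⊢; omega
    · subst h; simp

/-- Prefix sums of consecutive distances (Euler-tour potential). -/
def W (T : BTree ℕ) (a : ℕ) : ℕ := ∑ i ∈ Finset.Ico 1 a, T.dist i (i + 1)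

lemma dist_le_sum (T : BTree ℕ) : ∀ b a : ℕ, a ≤ b →
    T.dist a b ≤ ∑ i ∈ Finset.Ico a b, T.dist i (i + 1) := by
  intro b
  induction b with
  | zero => intro a ha; have : a = 0 := by omega
            subst this; simp [bdist_self]
  | succ b ih =>
    intro a ha
    rcases eq_or_lt_of_le ha with rfl | ha'
    · simp [bdist_self]
    have hab : a ≤ b := by omega
    calc T.dist a (b + 1) ≤ T.dist a b + T.dist b (b + 1) :=
          bdist_triangle T a b (b + 1) hab (by omega)
      _ ≤ (∑ i ∈ Finset.Ico a b, T.dist i (i + 1)) + T.dist b (b + 1) := by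
          have := ih a hab; omega
      _ = ∑ i ∈ Finset.Ico a (b + 1), T.dist i (i + 1) :=
          (Finset.sum_Ico_succ_top hab _).symm

lemma dist_add_W_le (T : BTree ℕ) (a b : ℕ) (h1 : 1 ≤ a) (h2 : a ≤ b) :
    T.dist a b + W T a ≤ W T b := by
  have hsplit : W T b = W T a + ∑ i ∈ Finset.Ico a b, T.dist i (i + 1) := by
    rw [W, W, Finset.sum_Ico_consecutive _ h1 h2]
  have := dist_le_sum T b a h2
  omega

lemma W_mono (T : BTree ℕ) (a b : ℕ) (h : a ≤ b) : W T a ≤ W T b :=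
  Finset.sum_le_sum_of_subset (Finset.Ico_subset_Ico le_rfl h)

/-- Let `X = (x 0, …, x (m-1)) ∈ [n]^m` be partitioned into `k` increasing
subsequences: there is `g : ℕ → Fin k` such that for all `s < t < m` with `g s = g t` one has
`x s ≤ x t` (i.e. `x s < x t` or `x s = x t`). Then for every BST `T` on `[n]`, the `k`-finger
cost satisfies `F^k_T(X) ≤ m + 2k(n−1)`. -/
theorem stmt9 (n k m : ℕ) (hn : 1 ≤ n) (hk : 1 ≤ k)
    (x : ℕ → ℕ) (hx : ∀ t, t < m → x t ∈ Finset.Icc 1 n)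
    (g : ℕ → Fin k) (hg : ∀ s t, s < t → t < m → g s = g t → x s ≤ x t)
    (T : BTree ℕ) (hbst : T.IsBST) (hkeys : T.keys = Finset.Icc 1 n) :
    fingerOpt T k m x ≤ m + 2 * k * (n - 1) := by
  simp only [Finset.mem_Icc] at hx
  set init : Fin k → ℕ := fun _ => 1 with hinit
  have hWn : W T n ≤ 2 * (n - 1) := by
    have := chain_sum T hbst 1 n hn hkeys
    rw [W]; omega
  -- structure of finger positions
  have hpos : ∀ t : ℕ, ∀ i : Fin k, fingerPos x g init i t = 1 ∨
      ∃ s, s < t ∧ g s = i ∧ fingerPos x g init i t = x s := by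
    intro t
    induction t with
    | zero => intro i; left; rfl
    | succ t ih =>
      intro i
      by_cases h : g t = i
      · right; exact ⟨t, Nat.lt_succ_self t, h, by simp [fingerPos, h]⟩
      · rcases ih i with h1 | ⟨s, hs, hgs, hv⟩
        · left; simpa [fingerPos, h] using h1
        · right; exact ⟨s, by omega, hgs, by simpa [fingerPos, h] using hv⟩
  have hrange : ∀ t, t ≤ m → ∀ i : Fin k, 1 ≤ fingerPos x g init i t ∧
      fingerPos x g init i t ≤ n := by
    intro t ht i
    rcases hpos t i with h | ⟨s, hs, _, hv⟩
    · rw [h]; exact ⟨le_rfl, hn⟩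
    · rw [hv]; exact ⟨(hx s (by omega)).1, (hx s (by omega)).2⟩
  have hle : ∀ t, t < m → fingerPos x g init (g t) t ≤ x t := by
    intro t ht
    rcases hpos t (g t) with h | ⟨s, hs, hgs, hv⟩
    · rw [h]; exact (hx t ht).1
    · rw [hv]; exact hg s t hs ht hgs
  -- telescoping potential argument
  have key : ∀ u, u ≤ m →
      (∑ t ∈ Finset.range u, T.dist (fingerPos x g init (g t) t) (x t))
        ≤ ∑ i : Fin k, W T (fingerPos x g init i u) := by
    intro u
    induction u with
    | zero => intro _; simp
    | succ u ih =>
      intro hu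
      have hu' : u < m := hu
      have ihu := ih (by omega)
      rw [Finset.sum_range_succ]
      have e1 : ∀ v : ℕ, (∑ i : Fin k, W T (fingerPos x g init i v))
          = (∑ i ∈ Finset.univ.erase (g u), W T (fingerPos x g init i v))
            + W T (fingerPos x g init (g u) v) :=
        fun v => (Finset.sum_erase_add _ _ (Finset.mem_univ (g u))).symm
      have e2 : (∑ i ∈ Finset.univ.erase (g u), W T (fingerPos x g init i (u + 1)))
          = ∑ i ∈ Finset.univ.erase (g u), W T (fingerPos x g init i u) := by
        apply Finset.sum_congr rfl
        intro i hi
        have : g u ≠ i := (Finset.ne_of_mem_erase hi).symm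
        simp [fingerPos, this]
      have e3 : fingerPos x g init (g u) (u + 1) = x u := by simp [fingerPos]
      have hd : T.dist (fingerPos x g init (g u) u) (x u)
          + W T (fingerPos x g init (g u) u) ≤ W T (x u) :=
        dist_add_W_le T _ _ (hrange u (by omega) (g u)).1 (hle u hu')
      have E1 := e1 u
      have E2 := e1 (u + 1)
      rw [e2, e3] at E2
      omega
  -- assemble
  have hcost : fingerCost T k m x g init ≤ m + 2 * k * (n - 1) := by
    rw [fingerCost, Finset.sum_add_distrib, Finset.sum_const, Finset.card_range, smul_eq_mul,
      mul_one]
    have h1 := key m le_rfl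
    have h2 : (∑ i : Fin k, W T (fingerPos x g init i m)) ≤ k * (2 * (n - 1)) := by
      calc (∑ i : Fin k, W T (fingerPos x g init i m))
          ≤ ∑ _i : Fin k, 2 * (n - 1) := by
            apply Finset.sum_le_sum
            intro i _
            exact le_trans (W_mono T _ n (hrange m le_rfl i).2) hWn
        _ = k * (2 * (n - 1)) := by
            rw [Finset.sum_const, Finset.card_univ, Fintype.card_fin, smul_eq_mul]
    have : 2 * k * (n - 1) = k * (2 * (n - 1)) := by ring
    omega
  exact le_trans (Nat.sInf_le ⟨g, init, rfl⟩) hcost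
end

section
/- Let G be a connected simple graph in which every vertex has degree at most 3, let R be a vertex of G, and let S be a finite set of vertices of G with |S| ≥ 2. Then Σ_{v ∈ S} dist_G(R, v) ≥ (|S|/2)·(log₂|S| − 4). -/
/-!
The ball of radius `j` around `R` has at most `3 · 2^j` vertices, since every vertex at
distance `d + 1 ≥ 1` reaches one vertex at distance `d` and hence at most two at distance `d + 2`.
So at least `|S| - 3 · 2^j` vertices of `S` lie at distance `> j` from `R`, and summing over
`j < D` gives `∑ dist ≥ D |S| - 3 · 2^D`; the choice `D = ⌊log₂ |S|⌋ - 1` yields the bound.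
-/

open Finset

theorem Real.logb_lt_natLog_add_one (b n : ℕ) : Real.logb b n < Nat.log b n + 1 :=
  natFloor_logb_natCast b n ▸ Nat.lt_floor_add_one _

theorem Finset.mul_card_le_sum_add_sum_card_filter_le {ι : Type*} (S : Finset ι) (f : ι → ℕ)
    (D : ℕ) : D * #S ≤ ∑ i ∈ S, f i + ∑ j ∈ range D, #{i ∈ S | f i ≤ j} := by
  have hlevel (i : ι) : D ≤ f i + #{j ∈ range D | f i ≤ j} := by
    have : {j ∈ range D | f i ≤ j} = Ico (f i) D := by ext; simp [and_comm]
    rw [this, Nat.card_Ico]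
    omega
  calc D * #S = ∑ _i ∈ S, D := by rw [sum_const, smul_eq_mul, mul_comm]
    _ ≤ ∑ i ∈ S, (f i + #{j ∈ range D | f i ≤ j}) := sum_le_sum fun i _ ↦ hlevel i
    _ = ∑ i ∈ S, f i + ∑ j ∈ range D, #{i ∈ S | f i ≤ j} := by
      simp only [sum_add_distrib, card_filter]
      rw [sum_comm]

namespace SimpleGraph

variable {V : Type*} (G : SimpleGraph V)

theorem exists_adj_dist_eq_of_dist_eq_add_one {u v : V} {d : ℕ} (h : G.dist u v = d + 1) :
    ∃ w, G.Adj w v ∧ G.dist u w = d := by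
  have hreach : G.Reachable u v := Reachable.of_dist_ne_zero (by omega)
  obtain ⟨p, hp⟩ := hreach.exists_walk_length_eq_dist
  have hnil : ¬p.Nil := by
    rw [← Walk.length_eq_zero_iff]; omega
  refine ⟨p.penultimate, p.adj_penultimate hnil, ?_⟩
  have hle : G.dist u p.penultimate ≤ d := by
    have := G.dist_le p.dropLast
    rw [Walk.length_dropLast] at this
    omega
  rcases (p.adj_penultimate hnil).diff_dist_adj (u := u) with h' | h' | h' <;> omega

variable [Fintype V]

noncomputable def distSphere (R : V) (d : ℕ) : Finset V := {v | G.dist R v = d}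

noncomputable def distBall (R : V) (d : ℕ) : Finset V := {v | G.dist R v ≤ d}

@[simp] theorem mem_distSphere {R v : V} {d : ℕ} : v ∈ G.distSphere R d ↔ G.dist R v = d := by
  simp [distSphere]

@[simp] theorem mem_distBall {R v : V} {d : ℕ} : v ∈ G.distBall R d ↔ G.dist R v ≤ d := by
  simp [distBall]

variable [DecidableRel G.Adj] {k : ℕ}

theorem card_distSphere_add_two_le (hdeg : ∀ v, G.degree v ≤ k + 1) (R : V) (d : ℕ) :
    #(G.distSphere R (d + 2)) ≤ #(G.distSphere R (d + 1)) * k := by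
  classical
  have hcover : G.distSphere R (d + 2) ⊆
      (G.distSphere R (d + 1)).biUnion fun u ↦ {w ∈ G.neighborFinset u | G.dist R w = d + 2} := by
    intro v hv
    obtain ⟨u, hadj, hu⟩ := G.exists_adj_dist_eq_of_dist_eq_add_one (G.mem_distSphere.1 hv)
    simp only [mem_biUnion, mem_distSphere, mem_filter, mem_neighborFinset]
    exact ⟨u, hu, hadj, G.mem_distSphere.1 hv⟩
  refine (card_le_card hcover).trans (card_biUnion_le_card_mul _ _ _ fun u hu ↦ ?_)
  -- one neighbour of `u` lies closer to `R`, so at most `k` lie farther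
  obtain ⟨w, hadj, hw⟩ := G.exists_adj_dist_eq_of_dist_eq_add_one (G.mem_distSphere.1 hu)
  have hsub : {x ∈ G.neighborFinset u | G.dist R x = d + 2} ⊆ (G.neighborFinset u).erase w := by
    intro x hx
    simp only [mem_filter] at hx
    exact mem_erase.2 ⟨by rintro rfl; omega, hx.1⟩
  have hw_mem : w ∈ G.neighborFinset u := (G.mem_neighborFinset _ _).2 hadj.symm
  calc _ ≤ #((G.neighborFinset u).erase w) := card_le_card hsub
    _ = G.degree u - 1 := by rw [card_erase_of_mem hw_mem, card_neighborFinset_eq_degree]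
    _ ≤ k := by have := hdeg u; omega

theorem card_distSphere_add_one_le (hdeg : ∀ v, G.degree v ≤ k + 1) (R : V) (d : ℕ) :
    #(G.distSphere R (d + 1)) ≤ (k + 1) * k ^ d := by
  induction d with
  | zero =>
    have hsub : G.distSphere R 1 ⊆ G.neighborFinset R := fun v hv ↦ by
      simpa [dist_eq_one_iff_adj] using hv
    simpa using (card_le_card hsub).trans ((card_neighborFinset_eq_degree G R).trans_le (hdeg R))
  | succ d ih =>
    calc _ ≤ #(G.distSphere R (d + 1)) * k := G.card_distSphere_add_two_le hdeg R d
      _ ≤ (k + 1) * k ^ d * k := Nat.mul_le_mul_right k ih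
      _ = (k + 1) * k ^ (d + 1) := by ring

theorem card_distBall_le (hconn : G.Connected) (hk : 2 ≤ k) (hdeg : ∀ v, G.degree v ≤ k + 1)
    (R : V) (d : ℕ) : #(G.distBall R d) ≤ (k + 1) * k ^ d := by
  classical
  induction d with
  | zero =>
    have : G.distBall R 0 = {R} := by
      ext v; simp [hconn.dist_eq_zero_iff, eq_comm]
    simp [this]
  | succ d ih =>
    have hsub : G.distBall R (d + 1) ⊆ G.distBall R d ∪ G.distSphere R (d + 1) := fun v hv ↦ by
      simp only [mem_union, mem_distBall, mem_distSphere] at hv ⊢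
      omega
    calc _ ≤ #(G.distBall R d) + #(G.distSphere R (d + 1)) :=
          (card_le_card hsub).trans (card_union_le _ _)
      _ ≤ (k + 1) * k ^ d + (k + 1) * k ^ d :=
          add_le_add ih (G.card_distSphere_add_one_le hdeg R d)
      _ ≤ (k + 1) * k ^ (d + 1) := by rw [pow_succ]; nlinarith

theorem mul_card_le_sum_dist_add (hconn : G.Connected) (hk : 2 ≤ k)
    (hdeg : ∀ v, G.degree v ≤ k + 1) (R : V) (S : Finset V) (D : ℕ) :
    D * #S ≤ ∑ v ∈ S, G.dist R v + (k + 1) * k ^ D := by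
  have hball (j : ℕ) : #{v ∈ S | G.dist R v ≤ j} ≤ (k + 1) * k ^ j :=
    (card_le_card fun v hv ↦ by simpa using (mem_filter.1 hv).2).trans
      (G.card_distBall_le hconn hk hdeg R j)
  calc D * #S ≤ ∑ v ∈ S, G.dist R v + ∑ j ∈ range D, #{v ∈ S | G.dist R v ≤ j} :=
        S.mul_card_le_sum_add_sum_card_filter_le _ D
    _ ≤ ∑ v ∈ S, G.dist R v + (k + 1) * ∑ j ∈ range D, k ^ j := by
        rw [mul_sum]; gcongr with j; exact hball j
    _ ≤ ∑ v ∈ S, G.dist R v + (k + 1) * k ^ D := by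
        gcongr; exact (Nat.geomSum_lt hk fun j hj ↦ mem_range.1 hj).le

end SimpleGraph

theorem stmt13_general {V : Type} [Fintype V] (G : SimpleGraph V)
    [DecidableRel G.Adj] (hconn : G.Connected) (hdeg : ∀ v, G.degree v ≤ 3)
    (R : V) (S : Finset V) (hS : 2 ≤ S.card) :
    ((S.card : ℝ) / 2) * (Real.logb 2 (S.card : ℝ) - 4) ≤ ∑ v ∈ S, (G.dist R v : ℝ) := by
  set D := Nat.log 2 #S - 1
  have hD : Nat.log 2 #S = D + 1 := by
    have : 1 ≤ Nat.log 2 #S := Nat.le_log_of_pow_le (by norm_num) (by simpa using hS)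
    omega
  have hcount : (D : ℝ) * #S ≤ ∑ v ∈ S, (G.dist R v : ℝ) + 3 * 2 ^ D := by
    exact_mod_cast G.mul_card_le_sum_dist_add hconn le_rfl hdeg R S D
  have hpow : (2 : ℝ) * 2 ^ D ≤ #S := by
    have := Nat.pow_log_le_self 2 (by omega : #S ≠ 0)
    rw [hD, pow_succ'] at this
    exact_mod_cast this
  have hlogb : Real.logb 2 #S < D + 2 := by
    have := Real.logb_lt_natLog_add_one 2 #S
    rw [hD] at this
    push_cast at this
    linarith
  have hsum : 0 ≤ ∑ v ∈ S, (G.dist R v : ℝ) := by positivity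
  have hS' : (2 : ℝ) ≤ #S := by exact_mod_cast hS
  -- for `log₂ |S| ≤ 3` the bound is negative; otherwise `|S| (log₂ |S| - 7/2)` dominates it
  rcases le_or_gt (Real.logb 2 #S) 3 with hl | hl <;> nlinarith

/-- In a connected simple graph of maximum degree at most `3`, for every
vertex `R` and every finite set `S` of vertices with `|S| ≥ 2`, the sum of distances from
`R` to the vertices of `S` is at least `(|S|/2)·(log₂|S| − 4)`. -/
theorem stmt13 {V : Type} [Fintype V] [DecidableEq V] (G : SimpleGraph V)
    [DecidableRel G.Adj] (hconn : G.Connected) (hdeg : ∀ v, G.degree v ≤ 3)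
    (R : V) (S : Finset V) (hS : 2 ≤ S.card) :
    ((S.card : ℝ) / 2) * (Real.logb 2 (S.card : ℝ) - 4) ≤ ∑ v ∈ S, (G.dist R v : ℝ) :=
  stmt13_general G hconn hdeg R S hS
end
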